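/- For any q-ary DMC W, bijective kernel g : 𝒳^ℓ → 𝒳^ℓ, index i ∈ {0,…,ℓ-1}, prefix u₀^{i-1} ∈ 𝒳^i, and x, x' ∈ 𝒳 with x ≠ x', the Bhattacharyya parameter of the conditioned subchannel satisfies (1/q^{2(ℓ-1-i)}) · Z_min(W)^{D^{(i)}_{x,x'}(u₀^{i-1})} ≤ Z_{x,x'}(W^{(i)}_{u₀^{i-1}}) ≤ q^{ℓ-1-i} · Z_max(W)^{D^{(i)}_{x,x'}(u₀^{i-1})}. -/

import Mathlib

/-!
The conditioned subchannel is the uniform mixture `q^{-(ℓ-1-i)} ∑_{u ∈ C(x)} W^ℓ(· | g u)` over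
the completions `u` of the prefix, of which there are at most `q^{ℓ-1-i}`. The scalar factor
pulls out of the Bhattacharyya parameter; `√(∑ a_u · ∑ b_v) ≤ ∑_{u,v} √(a_u b_v)` bounds the rest
above by the sum of the pairwise parameters `Z_{g u, g v}(W^ℓ)`, and keeping a single pair bounds
it below. By memorylessness `Z_{g u, g v}(W^ℓ) = ∏_j Z_{(g u)_j, (g v)_j}(W)`, whose factors are
`1` where the two codewords agree, so it lies between `Z_min^d` and `Z_max^d` for `d` their Hamming
distance; `d` is at least the partial distance, with equality for a suitable pair.
-/

open MeasureTheory Filter Real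
open scoped Classical

noncomputable section

namespace Polar

/-- `IsChannel W` : `W x y` is the probability of output `y` given input `x`,
each row is a probability distribution. -/
def IsChannel {X Y : Type*} (W : X → Y → ℝ) : Prop :=
  (∀ x y, 0 ≤ W x y) ∧ ∀ x, HasSum (W x) 1

/-- Bhattacharyya parameter `Z_{x,x'}(W)` between inputs `x` and `x'`. -/
def Zb {X Y : Type*} (W : X → Y → ℝ) (x x' : X) : ℝ :=
  ∑' y, Real.sqrt (W x y * W x' y)

/-- `Z_max(W) = max_{x ≠ x'} Z_{x,x'}(W)`. -/
def Zmax {X Y : Type*} (W : X → Y → ℝ) : ℝ :=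
  sSup {z | ∃ x x', x ≠ x' ∧ z = Zb W x x'}

/-- `Z_min(W) = min_{x,x'} Z_{x,x'}(W)`. -/
def Zmin {X Y : Type*} (W : X → Y → ℝ) : ℝ :=
  sInf {z | ∃ x x', z = Zb W x x'}

/-- The conditioned subchannel `W^{(i)}_{u_0^{i-1}} : X → Y^ℓ`. -/
def condSubCh {X Y : Type*} [Fintype X] {ℓ : ℕ} (W : X → Y → ℝ)
    (g : (Fin ℓ → X) → Fin ℓ → X) (i : Fin ℓ) (up : Fin i → X) :
    X → (Fin ℓ → Y) → ℝ :=
  fun ui y =>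
    (1 / (Fintype.card X : ℝ) ^ (ℓ - 1 - i.1)) *
      ∑ u : Fin ℓ → X,
        (if u i = ui ∧ (∀ j : Fin i, u ⟨j.1, j.2.trans i.2⟩ = up j) then
          ∏ j, W (g u j) (y j) else 0)

/-- Partial distance `D^{(i)}_{x,x'}(u_0^{i-1})` of the kernel `g`. -/
def partialDist {X : Type*} {ℓ : ℕ} (g : (Fin ℓ → X) → Fin ℓ → X) (i : Fin ℓ)
    (up : Fin i → X) (x x' : X) : ℕ :=
  sInf {d | ∃ v w : Fin ℓ → X,
    (v i = x ∧ ∀ j : Fin i, v ⟨j.1, j.2.trans i.2⟩ = up j) ∧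
    (w i = x' ∧ ∀ j : Fin i, w ⟨j.1, j.2.trans i.2⟩ = up j) ∧
    hammingDist (g v) (g w) = d}

theorem _root_.Real.sqrt_sum_le_sum_sqrt {ι : Type*} (s : Finset ι) {f : ι → ℝ}
    (hf : ∀ i ∈ s, 0 ≤ f i) : √(∑ i ∈ s, f i) ≤ ∑ i ∈ s, √(f i) := by
  rw [Real.sqrt_le_left (Finset.sum_nonneg fun i _ => Real.sqrt_nonneg _)]
  calc ∑ i ∈ s, f i = ∑ i ∈ s, √(f i) ^ 2 :=
        Finset.sum_congr rfl fun i hi => (Real.sq_sqrt (hf i hi)).symm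
    _ ≤ (∑ i ∈ s, √(f i)) ^ 2 :=
        Finset.sum_sq_le_sq_sum_of_nonneg fun i _ => Real.sqrt_nonneg _

theorem _root_.Real.sqrt_sum_mul_sum_le {ι κ : Type*} (s : Finset ι) (t : Finset κ)
    {f : ι → ℝ} {g : κ → ℝ} (hf : ∀ i ∈ s, 0 ≤ f i) (hg : ∀ k ∈ t, 0 ≤ g k) :
    √((∑ i ∈ s, f i) * ∑ k ∈ t, g k) ≤ ∑ i ∈ s, ∑ k ∈ t, √(f i * g k) := by
  rw [Finset.sum_mul_sum]
  refine (Real.sqrt_sum_le_sum_sqrt s fun i hi =>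
    Finset.sum_nonneg fun k hk => mul_nonneg (hf i hi) (hg k hk)).trans ?_
  exact Finset.sum_le_sum fun i hi =>
    Real.sqrt_sum_le_sum_sqrt t fun k hk => mul_nonneg (hf i hi) (hg k hk)

theorem _root_.Real.sqrt_mul_le_add_div_two {a b : ℝ} (ha : 0 ≤ a) (hb : 0 ≤ b) :
    √(a * b) ≤ (a + b) / 2 :=
  Real.sqrt_le_iff.mpr ⟨by positivity, by nlinarith [sq_nonneg (a - b)]⟩

theorem _root_.hasSum_fin_pi_prod {Y : Type*} {n : ℕ} {f : Fin n → Y → ℝ} {s : Fin n → ℝ}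
    (hf₀ : ∀ j y, 0 ≤ f j y) (hf : ∀ j, HasSum (f j) (s j)) :
    HasSum (fun y : Fin n → Y => ∏ j, f j (y j)) (∏ j, s j) := by
  induction n with
  | zero => simp
  | succ n ih =>
    set tail : (Fin n → Y) → ℝ := fun t => ∏ j : Fin n, f j.succ (t j)
    have htail : HasSum tail (∏ j : Fin n, s j.succ) :=
      ih (fun j y => hf₀ j.succ y) (fun j => hf j.succ)
    have hsummable : Summable fun p : Y × (Fin n → Y) => f 0 p.1 * tail p.2 :=
      Summable.mul_of_nonneg (f := f 0) (g := tail) (hf 0).summable htail.summable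
        (fun y => hf₀ 0 y) fun t => Finset.prod_nonneg fun j _ => hf₀ j.succ (t j)
    have hprod := HasSum.mul (f := f 0) (g := tail) (hf 0) htail hsummable
    rw [← (Fin.consEquiv fun _ => Y).hasSum_iff]
    simpa [Fin.consEquiv, Function.comp_def, Fin.prod_univ_succ, tail] using hprod

section Channel

variable {X Y : Type*} {W : X → Y → ℝ}

theorem Zb_nonneg (W : X → Y → ℝ) (x x' : X) : 0 ≤ Zb W x x' :=
  tsum_nonneg fun _ => Real.sqrt_nonneg _

theorem Zmin_nonneg (W : X → Y → ℝ) : 0 ≤ Zmin W :=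
  Real.sInf_nonneg fun _ ⟨x, x', hz⟩ => hz ▸ Zb_nonneg W x x'

theorem Zmax_nonneg (W : X → Y → ℝ) : 0 ≤ Zmax W :=
  Real.sSup_nonneg fun _ ⟨x, x', _, hz⟩ => hz ▸ Zb_nonneg W x x'

theorem Zmin_le_Zb (W : X → Y → ℝ) (x x' : X) : Zmin W ≤ Zb W x x' :=
  csInf_le ⟨0, fun _ ⟨a, b, hz⟩ => hz ▸ Zb_nonneg W a b⟩ ⟨x, x', rfl⟩

namespace IsChannel

theorem summable_sqrt_mul (hW : IsChannel W) (x x' : X) : Summable fun y => √(W x y * W x' y) :=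
  .of_nonneg_of_le (fun _ => Real.sqrt_nonneg _)
    (fun y => Real.sqrt_mul_le_add_div_two (hW.1 x y) (hW.1 x' y))
    (((hW.2 x).add (hW.2 x')).div_const 2).summable

theorem Zb_le_one (hW : IsChannel W) (x x' : X) : Zb W x x' ≤ 1 := by
  have hmean : HasSum (fun y => (W x y + W x' y) / 2) 1 := by
    simpa using ((hW.2 x).add (hW.2 x')).div_const 2
  exact hasSum_le (fun y => Real.sqrt_mul_le_add_div_two (hW.1 x y) (hW.1 x' y))
    (hW.summable_sqrt_mul x x').hasSum hmean

theorem Zb_self (hW : IsChannel W) (x : X) : Zb W x x = 1 := by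
  simp only [Zb, Real.sqrt_mul_self (hW.1 x _)]
  exact (hW.2 x).tsum_eq

theorem Zb_le_Zmax (hW : IsChannel W) {x x' : X} (h : x ≠ x') : Zb W x x' ≤ Zmax W :=
  le_csSup ⟨1, fun _ ⟨a, b, _, hz⟩ => hz ▸ hW.Zb_le_one a b⟩ ⟨x, x', h, rfl⟩

theorem Zmax_le_one (hW : IsChannel W) : Zmax W ≤ 1 :=
  Real.sSup_le (fun _ ⟨a, b, _, hz⟩ => hz ▸ hW.Zb_le_one a b) zero_le_one

theorem prod_Zb_eq_prod_filter_ne (hW : IsChannel W) {ι : Type*} [Fintype ι] (a b : ι → X) :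
    ∏ j, Zb W (a j) (b j) = ∏ j with a j ≠ b j, Zb W (a j) (b j) :=
  (Finset.prod_filter_of_ne (p := fun j => a j ≠ b j) fun j _ hj hab =>
    hj (by rw [hab, hW.Zb_self])).symm

theorem comp (hW : IsChannel W) {A : Type*} (f : A → X) :
    IsChannel fun a => W (f a) :=
  ⟨fun a => hW.1 (f a), fun a => hW.2 (f a)⟩

end IsChannel

def piChannel (W : X → Y → ℝ) (n : ℕ) : (Fin n → X) → (Fin n → Y) → ℝ :=
  fun a y => ∏ j, W (a j) (y j)

theorem isChannel_piChannel (hW : IsChannel W) (n : ℕ) : IsChannel (piChannel W n) :=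
  ⟨fun _ _ => Finset.prod_nonneg fun _ _ => hW.1 _ _, fun a => by
    have h := hasSum_fin_pi_prod (fun j => hW.1 (a j)) fun j => hW.2 (a j)
    rwa [Finset.prod_const_one] at h⟩

theorem IsChannel.Zb_piChannel (hW : IsChannel W) {n : ℕ} (a b : Fin n → X) :
    Zb (piChannel W n) a b = ∏ j, Zb W (a j) (b j) := by
  have hsqrt : ∀ y : Fin n → Y, √(piChannel W n a y * piChannel W n b y) =
      ∏ j, √(W (a j) (y j) * W (b j) (y j)) := fun y => by
    rw [piChannel, piChannel, ← Finset.prod_mul_distrib,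
      Real.sqrt_prod _ fun j _ => mul_nonneg (hW.1 _ _) (hW.1 _ _)]
  simp only [Zb, hsqrt]
  exact (hasSum_fin_pi_prod (fun _ _ => Real.sqrt_nonneg _)
    fun j => (hW.summable_sqrt_mul (a j) (b j)).hasSum).tsum_eq

theorem IsChannel.Zb_piChannel_le_Zmax_pow (hW : IsChannel W) {n d : ℕ} {a b : Fin n → X}
    (hd : d ≤ hammingDist a b) : Zb (piChannel W n) a b ≤ Zmax W ^ d := by
  refine le_trans ?_ (pow_le_pow_of_le_one (Zmax_nonneg W) hW.Zmax_le_one hd)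
  rw [hW.Zb_piChannel, hW.prod_Zb_eq_prod_filter_ne, hammingDist, ← Finset.prod_const]
  exact Finset.prod_le_prod (fun _ _ => Zb_nonneg W _ _)
    fun j hj => hW.Zb_le_Zmax (Finset.mem_filter.mp hj).2

theorem IsChannel.Zmin_pow_le_Zb_piChannel (hW : IsChannel W) {n : ℕ} (a b : Fin n → X) :
    Zmin W ^ hammingDist a b ≤ Zb (piChannel W n) a b := by
  rw [hW.Zb_piChannel, hW.prod_Zb_eq_prod_filter_ne, hammingDist, ← Finset.prod_const]
  exact Finset.prod_le_prod (fun _ _ => Zmin_nonneg W) fun j _ => Zmin_le_Zb W _ _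

end Channel

section Mixture

variable {A Z Y : Type*} {V : Z → Y → ℝ}

theorem Zb_const_mul (U : A → Y → ℝ) {c : ℝ} (hc : 0 ≤ c) (a b : A) :
    Zb (fun a y => c * U a y) a b = c * Zb U a b := by
  have hsqrt : ∀ y, √(c * U a y * (c * U b y)) = c * √(U a y * U b y) := fun y => by
    rw [mul_mul_mul_comm, ← sq, Real.sqrt_mul (sq_nonneg c), Real.sqrt_sq hc]
  simp only [Zb, hsqrt, tsum_mul_left]

theorem IsChannel.summable_sqrt_mul_sum (hV : IsChannel V) (s t : Finset Z) :
    Summable fun y => √((∑ u ∈ s, V u y) * ∑ v ∈ t, V v y) :=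
  .of_nonneg_of_le (fun _ => Real.sqrt_nonneg _)
    (fun y => Real.sqrt_sum_mul_sum_le s t (fun u _ => hV.1 u y) fun v _ => hV.1 v y)
    (summable_sum fun u _ => summable_sum fun v _ => hV.summable_sqrt_mul u v)

theorem IsChannel.Zb_sum_le (hV : IsChannel V) (S : A → Finset Z) (a b : A) :
    Zb (fun a y => ∑ u ∈ S a, V u y) a b ≤ ∑ u ∈ S a, ∑ v ∈ S b, Zb V u v := by
  have hsum : HasSum (fun y => ∑ u ∈ S a, ∑ v ∈ S b, √(V u y * V v y))
      (∑ u ∈ S a, ∑ v ∈ S b, Zb V u v) :=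
    hasSum_sum fun u _ => hasSum_sum fun v _ => (hV.summable_sqrt_mul u v).hasSum
  exact hasSum_le
    (fun y => Real.sqrt_sum_mul_sum_le _ _ (fun u _ => hV.1 u y) fun v _ => hV.1 v y)
    (hV.summable_sqrt_mul_sum (S a) (S b)).hasSum hsum

theorem IsChannel.Zb_le_Zb_sum (hV : IsChannel V) (S : A → Finset Z) {a b : A} {u v : Z}
    (hu : u ∈ S a) (hv : v ∈ S b) : Zb V u v ≤ Zb (fun a y => ∑ u ∈ S a, V u y) a b := by
  refine Summable.tsum_le_tsum (fun y => Real.sqrt_le_sqrt ?_)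
    (hV.summable_sqrt_mul u v) (hV.summable_sqrt_mul_sum (S a) (S b))
  exact mul_le_mul (Finset.single_le_sum (fun u _ => hV.1 u y) hu)
    (Finset.single_le_sum (fun v _ => hV.1 v y) hv) (hV.1 v y)
    (Finset.sum_nonneg fun u _ => hV.1 u y)

end Mixture

section Completions

variable {X : Type*} [Fintype X] {ℓ : ℕ}

def completions (i : Fin ℓ) (up : Fin i → X) (ui : X) : Finset (Fin ℓ → X) :=
  {u | u i = ui ∧ ∀ j : Fin i, u ⟨j, j.2.trans i.2⟩ = up j}

def completionDistances (g : (Fin ℓ → X) → Fin ℓ → X) (i : Fin ℓ) (up : Fin i → X)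
    (x x' : X) : Set ℕ :=
  {d | ∃ u v, u ∈ completions i up x ∧ v ∈ completions i up x' ∧ hammingDist (g u) (g v) = d}

variable {i : Fin ℓ} {up : Fin i → X}

theorem mem_completions {ui : X} {u : Fin ℓ → X} :
    u ∈ completions i up ui ↔ u i = ui ∧ ∀ j : Fin i, u ⟨j, j.2.trans i.2⟩ = up j := by
  simp [completions]

theorem completions_nonempty (ui : X) : (completions i up ui).Nonempty :=
  ⟨fun j => if h : j.1 < i then up ⟨j, h⟩ else ui, mem_completions.mpr ⟨by simp, by simp⟩⟩

theorem eq_of_mem_completions {ui : X} {u v : Fin ℓ → X} (hu : u ∈ completions i up ui)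
    (hv : v ∈ completions i up ui) (h : ∀ j, i < j → u j = v j) : u = v := by
  rw [mem_completions] at hu hv
  funext j
  rcases lt_trichotomy j i with hj | rfl | hj
  · simpa [hu.2 ⟨j, hj⟩] using (hv.2 ⟨j, hj⟩).symm
  · rw [hu.1, hv.1]
  · exact h j hj

theorem card_completions_le (ui : X) :
    (completions i up ui).card ≤ Fintype.card X ^ (ℓ - 1 - i) := by
  calc (completions i up ui).card ≤ (Finset.univ : Finset (Finset.Ioi i → X)).card :=
        Finset.card_le_card_of_injOn (fun u (j : Finset.Ioi i) => u j)
          (fun _ _ => Finset.mem_coe.mpr (Finset.mem_univ _))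
          fun u hu v hv huv => eq_of_mem_completions hu hv fun j hj =>
            congrFun huv ⟨j, Finset.mem_Ioi.mpr hj⟩
    _ = Fintype.card X ^ (ℓ - 1 - i) := by
      rw [Finset.card_univ, Fintype.card_fun, Fintype.card_coe, Fin.card_Ioi]

theorem condSubCh_eq {Y : Type*} (W : X → Y → ℝ) (g : (Fin ℓ → X) → Fin ℓ → X) :
    condSubCh W g i up = fun ui y =>
      1 / (Fintype.card X : ℝ) ^ (ℓ - 1 - i.1) *
        ∑ u ∈ completions i up ui, piChannel W ℓ (g u) y := by
  funext ui y
  rw [condSubCh, completions, Finset.sum_filter]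
  rfl

theorem partialDist_eq_sInf (g : (Fin ℓ → X) → Fin ℓ → X) (x x' : X) :
    partialDist g i up x x' = sInf (completionDistances g i up x x') := by
  simp only [partialDist, completionDistances, mem_completions]

theorem partialDist_le_hammingDist (g : (Fin ℓ → X) → Fin ℓ → X) {x x' : X}
    {u v : Fin ℓ → X} (hu : u ∈ completions i up x) (hv : v ∈ completions i up x') :
    partialDist g i up x x' ≤ hammingDist (g u) (g v) :=
  partialDist_eq_sInf g x x' ▸ Nat.sInf_le ⟨u, v, hu, hv, rfl⟩

theorem exists_hammingDist_eq_partialDist (g : (Fin ℓ → X) → Fin ℓ → X) (x x' : X) :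
    ∃ u v, u ∈ completions i up x ∧ v ∈ completions i up x' ∧
      hammingDist (g u) (g v) = partialDist g i up x x' := by
  obtain ⟨u, hu⟩ := completions_nonempty (i := i) (up := up) x
  obtain ⟨v, hv⟩ := completions_nonempty (i := i) (up := up) x'
  rw [partialDist_eq_sInf]
  exact Nat.sInf_mem (s := completionDistances g i up x x') ⟨_, u, v, hu, hv, rfl⟩

end Completions

theorem bhattacharyya_condSubCh_bounds_general {X Y : Type*} [Fintype X]
    (W : X → Y → ℝ) (hW : IsChannel W)
    {ℓ : ℕ} (g : (Fin ℓ → X) → Fin ℓ → X)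
    (i : Fin ℓ) (up : Fin i → X) (x x' : X) :
    (1 / (Fintype.card X : ℝ) ^ (2 * (ℓ - 1 - i.1))) *
        Zmin W ^ partialDist g i up x x' ≤ Zb (condSubCh W g i up) x x' ∧
      Zb (condSubCh W g i up) x x' ≤
        (Fintype.card X : ℝ) ^ (ℓ - 1 - i.1) *
          Zmax W ^ partialDist g i up x x' := by
  obtain ⟨u, v, hu, hv, huv⟩ := exists_hammingDist_eq_partialDist (i := i) (up := up) g x x'
  have hcard (ui : X) :
      ((completions i up ui).card : ℝ) ≤ (Fintype.card X : ℝ) ^ (ℓ - 1 - i.1) :=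
    mod_cast card_completions_le ui
  set N : ℝ := (Fintype.card X : ℝ) ^ (ℓ - 1 - i.1)
  set D := partialDist g i up x x'
  have hN : 1 ≤ N := one_le_pow₀ (mod_cast Fintype.card_pos_iff.mpr ⟨x⟩)
  have hV := (isChannel_piChannel hW ℓ).comp g
  rw [condSubCh_eq, Zb_const_mul _ (by positivity)]
  constructor
  · calc _ ≤ 1 / N * Zmin W ^ D := by
          rw [mul_comm 2, pow_mul]
          gcongr
          exacts [pow_nonneg (Zmin_nonneg W) D, le_self_pow₀ hN two_ne_zero]
      _ ≤ 1 / N * Zb (piChannel W ℓ) (g u) (g v) := by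
          rw [← huv]
          gcongr
          exact hW.Zmin_pow_le_Zb_piChannel _ _
      _ ≤ _ := by
          gcongr
          exact hV.Zb_le_Zb_sum (completions i up) hu hv
  · calc _ ≤ 1 / N * ∑ u ∈ completions i up x, ∑ v ∈ completions i up x', Zmax W ^ D := by
          gcongr
          exact (hV.Zb_sum_le _ x x').trans (Finset.sum_le_sum fun u hu =>
            Finset.sum_le_sum fun v hv =>
              hW.Zb_piChannel_le_Zmax_pow (partialDist_le_hammingDist g hu hv))
      _ ≤ 1 / N * (N * N * Zmax W ^ D) := by
          simp only [Finset.sum_const, nsmul_eq_mul, ← mul_assoc]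
          gcongr
          exacts [pow_nonneg (Zmax_nonneg W) D, hcard x, hcard x']
      _ = N * Zmax W ^ D := by field_simp

/-- bounds on the Bhattacharyya parameter of the conditioned
subchannel in terms of the partial distance. -/
theorem bhattacharyya_condSubCh_bounds {X Y : Type*} [Fintype X] [Countable Y]
    (hq : 2 ≤ Fintype.card X) (W : X → Y → ℝ) (hW : IsChannel W)
    {ℓ : ℕ} (g : (Fin ℓ → X) → Fin ℓ → X) (hg : Function.Bijective g)
    (i : Fin ℓ) (up : Fin i → X) (x x' : X) (hxx : x ≠ x') :
    (1 / (Fintype.card X : ℝ) ^ (2 * (ℓ - 1 - i.1))) *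
        Zmin W ^ partialDist g i up x x' ≤ Zb (condSubCh W g i up) x x' ∧
      Zb (condSubCh W g i up) x x' ≤
        (Fintype.card X : ℝ) ^ (ℓ - 1 - i.1) *
          Zmax W ^ partialDist g i up x x' :=
  bhattacharyya_condSubCh_bounds_general W hW g i up x x'

end Polar
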